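/- Let k ∈ ℕ, t > 0, and let f = (f₁, ..., f_k) be a k-tuple of continuous real-valued functions on [0, t]. Then there exists a unique k-tuple g = (g₁, ..., g_k) of continuous functions on [0, t] (the 'Tetris' of f) such that: (i) g₁(r) ≥ g₂(r) ≥ ... ≥ g_k(r) ≥ 0 for all r ∈ [0, t]; (ii) g_i(r) − g_i(0) = f_i(r) − f_i(0) for all i and all r ∈ [0, t]; and (iii) g is minimal among all tuples satisfying (i) and (ii): if h = (h₁, ..., h_k) is any k-tuple of continuous functions on [0, t] satisfying (i) and (ii), then g_i(r) ≤ h_i(r) for all i ∈ {1, ..., k} and all r ∈ [0, t]. -/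

import Mathlib

/-!
Build the stack from the bottom: the lowest function is translated vertically to have minimum
`0`, and each next one by the least constant that puts it above the level already built.
An admissible tuple `h` consists of vertical translates of the same functions, so by induction
from the bottom `hᵢ ≥ hᵢ₊₁ ≥ gᵢ₊₁`, and hence `hᵢ ≥ gᵢ` because `gᵢ` is the least such translate.
Uniqueness follows since two minimal tuples lie below each other.
-/

open Set

section Tetris

variable {X : Type*}

/-- The least vertical translate of `u` lying above `v`. -/
noncomputable def dropOnto (u v : X → ℝ) : X → ℝ :=
  fun x => u x + ⨆ y, (v y - u y)

lemma dropOnto_sub_dropOnto (u v : X → ℝ) (x y : X) :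
    dropOnto u v x - dropOnto u v y = u x - u y := by
  simp only [dropOnto]; ring

lemma dropOnto_le {u v w : X → ℝ} (hvw : v ≤ w) (hw : ∀ x y, w x - w y = u x - u y) :
    dropOnto u v ≤ w := by
  intro x
  have hsup : ⨆ y, (v y - u y) ≤ w x - u x := by
    have : Nonempty X := ⟨x⟩
    refine ciSup_le fun y => ?_
    linarith [hvw y, hw x y]
  simp only [dropOnto]
  linarith

noncomputable def tetrisStack (F : ℕ → X → ℝ) : ℕ → X → ℝ
  | 0 => 0
  | n + 1 => dropOnto (F n) (tetrisStack F n)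

variable {F : ℕ → X → ℝ}

lemma tetrisStack_succ_sub (n : ℕ) (x y : X) :
    tetrisStack F (n + 1) x - tetrisStack F (n + 1) y = F n x - F n y :=
  dropOnto_sub_dropOnto _ _ x y

lemma tetrisStack_succ_le {H : ℕ → X → ℝ} (hH₀ : 0 ≤ H 0) (hH : Monotone H)
    (hHF : ∀ n x y, H n x - H n y = F n x - F n y) : ∀ n, tetrisStack F (n + 1) ≤ H n
  | 0 => dropOnto_le hH₀ (hHF 0)
  | n + 1 => dropOnto_le ((tetrisStack_succ_le hH₀ hH hHF n).trans (hH n.le_succ)) (hHF _)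

variable [TopologicalSpace X]

lemma Continuous.dropOnto {u : X → ℝ} (hu : Continuous u) (v : X → ℝ) :
    Continuous (dropOnto u v) :=
  hu.add continuous_const

lemma le_dropOnto [CompactSpace X] {u v : X → ℝ} (hu : Continuous u) (hv : Continuous v) :
    v ≤ dropOnto u v := by
  intro x
  have : v x - u x ≤ ⨆ y, (v y - u y) :=
    le_ciSup (isCompact_range (hv.sub hu)).bddAbove x
  simp only [dropOnto]
  linarith

lemma continuous_tetrisStack (hF : ∀ n, Continuous (F n)) : ∀ n, Continuous (tetrisStack F n)
  | 0 => continuous_const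
  | n + 1 => (hF n).dropOnto _

lemma monotone_tetrisStack [CompactSpace X] (hF : ∀ n, Continuous (F n)) :
    Monotone (tetrisStack F) :=
  monotone_nat_of_le_succ fun n => le_dropOnto (hF n) (continuous_tetrisStack hF n)

lemma tetrisStack_nonneg [CompactSpace X] (hF : ∀ n, Continuous (F n)) (n : ℕ) :
    0 ≤ tetrisStack F n :=
  monotone_tetrisStack hF n.zero_le

end Tetris

theorem tetris_exists_unique (k : ℕ) (hk : 0 < k) (t : ℝ) (ht : 0 < t)
    (f : Fin k → ℝ → ℝ) (hf : ∀ i, ContinuousOn (f i) (Set.Icc 0 t)) :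
    ∃! g : Fin k → Set.Icc (0 : ℝ) t → ℝ,
      (∀ i, Continuous (g i)) ∧
      (∀ r, (∀ i j : Fin k, i ≤ j → g j r ≤ g i r) ∧ ∀ i, 0 ≤ g i r) ∧
      (∀ i r, g i r - g i ⟨0, le_refl 0, ht.le⟩ = f i r - f i 0) ∧
      (∀ h : Fin k → Set.Icc (0 : ℝ) t → ℝ,
        (∀ i, Continuous (h i)) →
        (∀ r, (∀ i j : Fin k, i ≤ j → h j r ≤ h i r) ∧ ∀ i, 0 ≤ h i r) →
        (∀ i r, h i r - h i ⟨0, le_refl 0, ht.le⟩ = f i r - f i 0) →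
        ∀ i r, g i r ≤ h i r) := by
  have : CompactSpace (Icc 0 t) := isCompact_iff_compactSpace.mp isCompact_Icc
  -- Level `m` from the bottom is `f (k - 1 - m)`; the truncated subtraction repeats `f 0` above.
  let idx : ℕ → Fin k := fun m => ⟨k - 1 - m, by omega⟩
  have idx_rev (i : Fin k) : idx (k - 1 - i) = i := Fin.ext (by simp only [idx]; omega)
  have idx_anti : Antitone idx := fun m n hmn => Fin.le_def.2 (by simp only [idx]; omega)
  let F (m : ℕ) (r : Icc 0 t) : ℝ := f (idx m) r
  have hF (m : ℕ) : Continuous (F m) := (hf _).domRestrict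
  let g (i : Fin k) : Icc 0 t → ℝ := tetrisStack F (k - 1 - i + 1)
  have hg_cont (i : Fin k) : Continuous (g i) := continuous_tetrisStack hF _
  have hg_ord (r : Icc 0 t) : (∀ i j : Fin k, i ≤ j → g j r ≤ g i r) ∧ ∀ i, 0 ≤ g i r :=
    ⟨fun i j hij => monotone_tetrisStack hF (by omega) r, fun i => tetrisStack_nonneg hF _ r⟩
  have hg_incr (i : Fin k) (r : Icc 0 t) :
      g i r - g i ⟨0, le_refl 0, ht.le⟩ = f i r - f i 0 := by
    simp only [g, tetrisStack_succ_sub, F, idx_rev]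
  have hg_min (h : Fin k → Icc 0 t → ℝ)
      (hord : ∀ r, (∀ i j : Fin k, i ≤ j → h j r ≤ h i r) ∧ ∀ i, 0 ≤ h i r)
      (hincr : ∀ i r, h i r - h i ⟨0, le_refl 0, ht.le⟩ = f i r - f i 0) (i : Fin k)
      (r : Icc 0 t) : g i r ≤ h i r := by
    have hle := tetrisStack_succ_le (F := F) (H := fun m => h (idx m)) (fun r => (hord r).2 _)
      (fun m n hmn r => (hord r).1 _ _ (idx_anti hmn))
      (fun m x y => by linarith [hincr (idx m) x, hincr (idx m) y]) (k - 1 - i) r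
    rwa [idx_rev] at hle
  refine ⟨g, ⟨hg_cont, hg_ord, hg_incr, fun h _ => hg_min h⟩, ?_⟩
  rintro g' ⟨-, hg'_ord, hg'_incr, hg'_min⟩
  funext i r
  exact le_antisymm (hg'_min g hg_cont hg_ord hg_incr i r) (hg_min g' hg'_ord hg'_incr i r)
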